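/- arXiv:2210.17171 — 12 statements merged into one kernel-verified Lean document; each statement's English description precedes it below -/
import Mathlib

section
/- Let N ≥ 1, b₁, …, b_N ∈ ℝ, let V : (0,∞)^N → ℝ be differentiable, and let q, q' ∈ (0,∞)^N, p, p' ∈ ℝ^N satisfy bₖ ≤ qₖ²·q'ₖ² and the update equations q'ₖ·√(1 − bₖ/(qₖ²·q'ₖ²)) + pₖ = ∂V/∂qₖ(q) and p'ₖ = qₖ·√(1 − bₖ/(qₖ²·q'ₖ²)) for each k = 1, …, N. Then, with J₊(q,p) = Σₖ (pₖ² + bₖ/qₖ²), J₋(q,p) = Σₖ qₖ², J₃(q,p) = Σₖ qₖ·pₖ, the updated values satisfy: J₊(q',p') = J₋(q,p); J₋(q',p') = J₊(q,p) − 2·Σₖ pₖ·∂V/∂qₖ(q) + Σₖ (∂V/∂qₖ(q))²; and J₃(q',p') = −J₃(q,p) + Σₖ qₖ·∂V/∂qₖ(q). -/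
/-!
The update acts coordinatewise, and with `ℓ = √(1 - b / (q² q'²))` one has
`q'² ℓ² = q'² - b / q²` and `q² ℓ² = q² - b / q'²`. Since `p' = q ℓ` and `q' ℓ = ∂V/∂q - p`,
each coordinate of `J₊(q', p')`, `J₋(q', p')` and `J₃(q', p')` is an elementary expression in
`q`, `p` and `∂V/∂q`; summing over the coordinates gives the three identities.
-/

open Finset

namespace QuasiStandardUpdate

variable {b q q' p p' d : ℝ}

lemma sq_sqrt_one_sub_div_mul (hq : q ≠ 0) (hq' : q' ≠ 0) (hb : b ≤ q ^ 2 * q' ^ 2) :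
    √(1 - b / (q ^ 2 * q' ^ 2)) ^ 2 = 1 - b / (q ^ 2 * q' ^ 2) := by
  have hpos : 0 < q ^ 2 * q' ^ 2 := by positivity
  exact Real.sq_sqrt (sub_nonneg.mpr ((div_le_one hpos).mpr hb))

lemma jPlus_coord (hq : q ≠ 0) (hq' : q' ≠ 0) (hb : b ≤ q ^ 2 * q' ^ 2)
    (hp' : p' = q * √(1 - b / (q ^ 2 * q' ^ 2))) :
    p' ^ 2 + b / q' ^ 2 = q ^ 2 := by
  rw [hp', mul_pow, sq_sqrt_one_sub_div_mul hq hq' hb]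
  field_simp
  ring

lemma jMinus_coord (hq : q ≠ 0) (hq' : q' ≠ 0) (hb : b ≤ q ^ 2 * q' ^ 2)
    (hupdate : q' * √(1 - b / (q ^ 2 * q' ^ 2)) + p = d) :
    q' ^ 2 = (p ^ 2 + b / q ^ 2) - 2 * (p * d) + d ^ 2 := by
  have hsq := sq_sqrt_one_sub_div_mul hq hq' hb
  calc q' ^ 2 = (q' * √(1 - b / (q ^ 2 * q' ^ 2))) ^ 2 + b / q ^ 2 := by
        rw [mul_pow, hsq]
        field_simp
        ring
    _ = (d - p) ^ 2 + b / q ^ 2 := by rw [← hupdate, add_sub_cancel_right]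
    _ = (p ^ 2 + b / q ^ 2) - 2 * (p * d) + d ^ 2 := by ring

lemma jThree_coord (hupdate : q' * √(1 - b / (q ^ 2 * q' ^ 2)) + p = d)
    (hp' : p' = q * √(1 - b / (q ^ 2 * q' ^ 2))) :
    q' * p' = -(q * p) + q * d := by
  rw [hp', ← hupdate]
  ring

end QuasiStandardUpdate

open QuasiStandardUpdate in
theorem sl2_generator_evolution_general (N : ℕ) (b : Fin N → ℝ)
    (V : (Fin N → ℝ) → ℝ)
    (q q' p p' : Fin N → ℝ)
    (hq : ∀ k, 0 < q k) (hq' : ∀ k, 0 < q' k)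
    (hb : ∀ k, b k ≤ (q k) ^ 2 * (q' k) ^ 2)
    (hup1 : ∀ k, q' k * Real.sqrt (1 - b k / ((q k) ^ 2 * (q' k) ^ 2)) + p k
        = fderiv ℝ V q (Pi.single k 1))
    (hup2 : ∀ k, p' k = q k * Real.sqrt (1 - b k / ((q k) ^ 2 * (q' k) ^ 2))) :
    (∑ k, ((p' k) ^ 2 + b k / (q' k) ^ 2) = ∑ k, (q k) ^ 2)
    ∧ (∑ k, (q' k) ^ 2
        = (∑ k, ((p k) ^ 2 + b k / (q k) ^ 2))
          - 2 * ∑ k, p k * fderiv ℝ V q (Pi.single k 1)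
          + ∑ k, (fderiv ℝ V q (Pi.single k 1)) ^ 2)
    ∧ (∑ k, q' k * p' k
        = -(∑ k, q k * p k) + ∑ k, q k * fderiv ℝ V q (Pi.single k 1)) := by
  have hq0 k := (hq k).ne'
  have hq'0 k := (hq' k).ne'
  refine ⟨sum_congr rfl fun k _ => jPlus_coord (hq0 k) (hq'0 k) (hb k) (hup2 k), ?_, ?_⟩
  · rw [sum_congr rfl fun k _ => jMinus_coord (hq0 k) (hq'0 k) (hb k) (hup1 k),
      sum_add_distrib, sum_sub_distrib, mul_sum]
  · rw [sum_congr rfl fun k _ => jThree_coord (hup1 k) (hup2 k), sum_add_distrib,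
      sum_neg_distrib]

theorem sl2_generator_evolution (N : ℕ) (hN : 1 ≤ N) (b : Fin N → ℝ)
    (V : (Fin N → ℝ) → ℝ)
    (hV : ∀ q : Fin N → ℝ, (∀ k, 0 < q k) → DifferentiableAt ℝ V q)
    (q q' p p' : Fin N → ℝ)
    (hq : ∀ k, 0 < q k) (hq' : ∀ k, 0 < q' k)
    (hb : ∀ k, b k ≤ (q k) ^ 2 * (q' k) ^ 2)
    (hup1 : ∀ k, q' k * Real.sqrt (1 - b k / ((q k) ^ 2 * (q' k) ^ 2)) + p k
        = fderiv ℝ V q (Pi.single k 1))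
    (hup2 : ∀ k, p' k = q k * Real.sqrt (1 - b k / ((q k) ^ 2 * (q' k) ^ 2))) :
    (∑ k, ((p' k) ^ 2 + b k / (q' k) ^ 2) = ∑ k, (q k) ^ 2)
    ∧ (∑ k, (q' k) ^ 2
        = (∑ k, ((p k) ^ 2 + b k / (q k) ^ 2))
          - 2 * ∑ k, p k * fderiv ℝ V q (Pi.single k 1)
          + ∑ k, (fderiv ℝ V q (Pi.single k 1)) ^ 2)
    ∧ (∑ k, q' k * p' k
        = -(∑ k, q k * p k) + ∑ k, q k * fderiv ℝ V q (Pi.single k 1)) :=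
  sl2_generator_evolution_general N b V q q' p p' hq hq' hb hup1 hup2
end

section
/- Let N ≥ 1, b₁, …, b_N ∈ ℝ, let V : (0,∞)^N → ℝ be differentiable, and let q, q' ∈ (0,∞)^N, p, p' ∈ ℝ^N satisfy bₖ ≤ qₖ²·q'ₖ² and the update equations q'ₖ·√(1 − bₖ/(qₖ²·q'ₖ²)) + pₖ = ∂V/∂qₖ(q) and p'ₖ = qₖ·√(1 − bₖ/(qₖ²·q'ₖ²)) for each k. Then the Casimir C(q,p) = J₊(q,p)·J₋(q,p) − J₃(q,p)² satisfies C(q',p') − C(q,p) = −2·(Σₖ qₖ²)·(Σₖ pₖ·∂V/∂qₖ(q)) + (Σₖ qₖ²)·(Σₖ (∂V/∂qₖ(q))²) + 2·(Σₖ qₖ·pₖ)·(Σₖ qₖ·∂V/∂qₖ(q)) − (Σₖ qₖ·∂V/∂qₖ(q))². -/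
/-!
The quasi-standard update acts on the generators of the sl₂(ℝ) realisation by
`J₊' = J₋`, `J₃' = Σ qₖ vₖ - J₃` and `J₋' = J₊ - 2 Σ pₖ vₖ + Σ vₖ²`, where `vₖ = ∂V/∂qₖ(q)`:
coordinatewise, the square root `sₖ` satisfies `qₖ² sₖ² = qₖ² - bₖ/q'ₖ²` and
`q'ₖ² sₖ² = q'ₖ² - bₖ/qₖ²`. Substituting these into `C = J₊ J₋ - J₃²` gives the formula.
-/

open Finset

section OneDegreeOfFreedom

/-- One coordinate of the quasi-standard update, `v` playing the role of `∂V/∂qₖ(q)`. -/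
def IsQuasiStandardStep (b q p v q' p' : ℝ) : Prop :=
  q' * √(1 - b / (q ^ 2 * q' ^ 2)) + p = v ∧ p' = q * √(1 - b / (q ^ 2 * q' ^ 2))

variable {b q p v q' p' : ℝ}

theorem sq_sqrt_one_sub_div_of_le (hq : q ≠ 0) (hq' : q' ≠ 0) (hb : b ≤ q ^ 2 * q' ^ 2) :
    √(1 - b / (q ^ 2 * q' ^ 2)) ^ 2 = 1 - b / (q ^ 2 * q' ^ 2) :=
  Real.sq_sqrt <| sub_nonneg.mpr <| (div_le_one (by positivity)).mpr hb

namespace IsQuasiStandardStep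

theorem mul_eq (h : IsQuasiStandardStep b q p v q' p') : q' * p' = q * (v - p) := by
  rw [h.2, ← h.1]
  ring

theorem jPlus_term_eq (h : IsQuasiStandardStep b q p v q' p') (hq : q ≠ 0) (hq' : q' ≠ 0)
    (hb : b ≤ q ^ 2 * q' ^ 2) : p' ^ 2 + b / q' ^ 2 = q ^ 2 := by
  rw [h.2, mul_pow, sq_sqrt_one_sub_div_of_le hq hq' hb]
  field_simp
  ring

theorem sq_eq (h : IsQuasiStandardStep b q p v q' p') (hq : q ≠ 0) (hq' : q' ≠ 0)
    (hb : b ≤ q ^ 2 * q' ^ 2) : q' ^ 2 = (v - p) ^ 2 + b / q ^ 2 := by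
  rw [← h.1, add_sub_cancel_right, mul_pow, sq_sqrt_one_sub_div_of_le hq hq' hb]
  field_simp
  ring

end IsQuasiStandardStep

end OneDegreeOfFreedom

section Realisation

variable {ι : Type*} [Fintype ι]

noncomputable def jPlus (b q p : ι → ℝ) : ℝ := ∑ k, (p k ^ 2 + b k / q k ^ 2)

def jMinus (q : ι → ℝ) : ℝ := ∑ k, q k ^ 2

def jThree (q p : ι → ℝ) : ℝ := ∑ k, q k * p k

noncomputable def casimir (b q p : ι → ℝ) : ℝ := jPlus b q p * jMinus q - jThree q p ^ 2

variable {b q p v q' p' : ι → ℝ}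

theorem jThree_of_isQuasiStandardStep
    (h : ∀ k, IsQuasiStandardStep (b k) (q k) (p k) (v k) (q' k) (p' k)) :
    jThree q' p' = ∑ k, q k * v k - jThree q p := by
  simp only [jThree, ← sum_sub_distrib, (h _).mul_eq, mul_sub]

theorem jPlus_of_isQuasiStandardStep
    (h : ∀ k, IsQuasiStandardStep (b k) (q k) (p k) (v k) (q' k) (p' k))
    (hq : ∀ k, q k ≠ 0) (hq' : ∀ k, q' k ≠ 0) (hb : ∀ k, b k ≤ q k ^ 2 * q' k ^ 2) :
    jPlus b q' p' = jMinus q :=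
  sum_congr rfl fun k _ ↦ (h k).jPlus_term_eq (hq k) (hq' k) (hb k)

theorem jMinus_of_isQuasiStandardStep
    (h : ∀ k, IsQuasiStandardStep (b k) (q k) (p k) (v k) (q' k) (p' k))
    (hq : ∀ k, q k ≠ 0) (hq' : ∀ k, q' k ≠ 0) (hb : ∀ k, b k ≤ q k ^ 2 * q' k ^ 2) :
    jMinus q' = jPlus b q p - 2 * ∑ k, p k * v k + ∑ k, v k ^ 2 := by
  simp only [jMinus, jPlus, fun k ↦ (h k).sq_eq (hq k) (hq' k) (hb k), mul_sum,
    ← sum_sub_distrib, ← sum_add_distrib]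
  exact sum_congr rfl fun k _ ↦ by ring

theorem casimir_sub_of_isQuasiStandardStep
    (h : ∀ k, IsQuasiStandardStep (b k) (q k) (p k) (v k) (q' k) (p' k))
    (hq : ∀ k, q k ≠ 0) (hq' : ∀ k, q' k ≠ 0) (hb : ∀ k, b k ≤ q k ^ 2 * q' k ^ 2) :
    casimir b q' p' - casimir b q p
      = -2 * jMinus q * (∑ k, p k * v k) + jMinus q * (∑ k, v k ^ 2)
        + 2 * jThree q p * (∑ k, q k * v k) - (∑ k, q k * v k) ^ 2 := by
  rw [casimir, casimir, jPlus_of_isQuasiStandardStep h hq hq' hb,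
    jMinus_of_isQuasiStandardStep h hq hq' hb, jThree_of_isQuasiStandardStep h]
  ring

end Realisation

theorem casimir_evolution_general (N : ℕ) (b : Fin N → ℝ)
    (V : (Fin N → ℝ) → ℝ)
    (q q' p p' : Fin N → ℝ)
    (hq : ∀ k, 0 < q k) (hq' : ∀ k, 0 < q' k)
    (hb : ∀ k, b k ≤ (q k) ^ 2 * (q' k) ^ 2)
    (hup1 : ∀ k, q' k * Real.sqrt (1 - b k / ((q k) ^ 2 * (q' k) ^ 2)) + p k
        = fderiv ℝ V q (Pi.single k 1))
    (hup2 : ∀ k, p' k = q k * Real.sqrt (1 - b k / ((q k) ^ 2 * (q' k) ^ 2))) :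
    ((∑ k, ((p' k) ^ 2 + b k / (q' k) ^ 2)) * (∑ k, (q' k) ^ 2)
        - (∑ k, q' k * p' k) ^ 2)
      - ((∑ k, ((p k) ^ 2 + b k / (q k) ^ 2)) * (∑ k, (q k) ^ 2)
        - (∑ k, q k * p k) ^ 2)
    = -2 * (∑ k, (q k) ^ 2) * (∑ k, p k * fderiv ℝ V q (Pi.single k 1))
      + (∑ k, (q k) ^ 2) * (∑ k, (fderiv ℝ V q (Pi.single k 1)) ^ 2)
      + 2 * (∑ k, q k * p k) * (∑ k, q k * fderiv ℝ V q (Pi.single k 1))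
      - (∑ k, q k * fderiv ℝ V q (Pi.single k 1)) ^ 2 :=
  casimir_sub_of_isQuasiStandardStep (v := fun k ↦ fderiv ℝ V q (Pi.single k 1))
    (fun k ↦ ⟨hup1 k, hup2 k⟩) (fun k ↦ (hq k).ne') (fun k ↦ (hq' k).ne') hb

theorem casimir_evolution (N : ℕ) (hN : 1 ≤ N) (b : Fin N → ℝ)
    (V : (Fin N → ℝ) → ℝ)
    (hV : ∀ q : Fin N → ℝ, (∀ k, 0 < q k) → DifferentiableAt ℝ V q)
    (q q' p p' : Fin N → ℝ)
    (hq : ∀ k, 0 < q k) (hq' : ∀ k, 0 < q' k)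
    (hb : ∀ k, b k ≤ (q k) ^ 2 * (q' k) ^ 2)
    (hup1 : ∀ k, q' k * Real.sqrt (1 - b k / ((q k) ^ 2 * (q' k) ^ 2)) + p k
        = fderiv ℝ V q (Pi.single k 1))
    (hup2 : ∀ k, p' k = q k * Real.sqrt (1 - b k / ((q k) ^ 2 * (q' k) ^ 2))) :
    ((∑ k, ((p' k) ^ 2 + b k / (q' k) ^ 2)) * (∑ k, (q' k) ^ 2)
        - (∑ k, q' k * p' k) ^ 2)
      - ((∑ k, ((p k) ^ 2 + b k / (q k) ^ 2)) * (∑ k, (q k) ^ 2)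
        - (∑ k, q k * p k) ^ 2)
    = -2 * (∑ k, (q k) ^ 2) * (∑ k, p k * fderiv ℝ V q (Pi.single k 1))
      + (∑ k, (q k) ^ 2) * (∑ k, (fderiv ℝ V q (Pi.single k 1)) ^ 2)
      + 2 * (∑ k, q k * p k) * (∑ k, q k * fderiv ℝ V q (Pi.single k 1))
      - (∑ k, q k * fderiv ℝ V q (Pi.single k 1)) ^ 2 :=
  casimir_evolution_general N b V q q' p p' hq hq' hb hup1 hup2
end

section
/- Let b ∈ ℝ and let g : (0,∞) → ℝ and F : (0,∞) → ℝ be functions such that for all q, q' > 0 one has q²·(g(q·q'))² + b/(q')² = F(q) (i.e., the left-hand side is independent of q'). Then there exists a constant C ∈ ℝ such that (g(ξ))² = C − b/ξ² for all ξ > 0 (and F(q) = C·q² for all q > 0). -/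
theorem kinetic_coefficient_classification (b : ℝ) (g F : ℝ → ℝ)
    (h : ∀ q q' : ℝ, 0 < q → 0 < q' →
      q ^ 2 * (g (q * q')) ^ 2 + b / q' ^ 2 = F q) :
    ∃ C : ℝ, (∀ ξ : ℝ, 0 < ξ → (g ξ) ^ 2 = C - b / ξ ^ 2) ∧
      (∀ q : ℝ, 0 < q → F q = C * q ^ 2) := by
  have hg : ∀ ξ : ℝ, 0 < ξ → (g ξ) ^ 2 = F 1 - b / ξ ^ 2 := fun ξ hξ => by
    have h1ξ := h 1 ξ one_pos hξ
    rw [one_mul] at h1ξ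
    linear_combination h1ξ
  refine ⟨F 1, hg, fun q hq => ?_⟩
  have hF := h q q⁻¹ hq (inv_pos.2 hq)
  rw [mul_inv_cancel₀ hq.ne', hg 1 one_pos, inv_pow, div_inv_eq_mul] at hF
  linear_combination -hF
end

section
/- Let N ≥ 1, b₁, …, b_N ∈ ℝ, let W : (0,∞) → ℝ be differentiable, and set V(q) = W(Σₗ qₗ²). Let q, q' ∈ (0,∞)^N, p, p' ∈ ℝ^N satisfy bₖ ≤ qₖ²·q'ₖ² and the update equations q'ₖ·√(1 − bₖ/(qₖ²·q'ₖ²)) + pₖ = 2·W'(Σₗ qₗ²)·qₖ and p'ₖ = qₖ·√(1 − bₖ/(qₖ²·q'ₖ²)) for each k. Then, with J₊(q,p) = Σₖ (pₖ² + bₖ/qₖ²), J₋(q,p) = Σₖ qₖ², J₃(q,p) = Σₖ qₖ·pₖ, the evolution of the generators closes on the sl₂ evolution map with f = W': (J₊(q',p'), J₋(q',p'), J₃(q',p')) = Φ_{W'}(J₊(q,p), J₋(q,p), J₃(q,p)), i.e. J₊(q',p') = J₋(q,p), J₋(q',p') = J₊(q,p) − 4·J₃(q,p)·W'(J₋(q,p))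 + 4·J₋(q,p)·W'(J₋(q,p))², and J₃(q',p') = −J₃(q,p) + 2·J₋(q,p)·W'(J₋(q,p)). -/
open Finset

/-! The update acts on each coordinate separately, and for one degree of freedom the three
identities follow from `(q √(1 - b/(q²q'²)))² = q² - b/q'²`, its analogue with `q, q'` swapped, and
`q' √(1 - b/(q²q'²)) = 2 f q - p`. Since `f = W'(J₋)` is the same for all coordinates, summing
gives the closure. -/

lemma sq_mul_sqrt_one_sub_div {b x y : ℝ} (hx : x ≠ 0) (hy : y ≠ 0) (hb : b ≤ x ^ 2 * y ^ 2) :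
    (x * √(1 - b / (x ^ 2 * y ^ 2))) ^ 2 = x ^ 2 - b / y ^ 2 := by
  have hxy : 0 < x ^ 2 * y ^ 2 := by positivity
  have hle : b / (x ^ 2 * y ^ 2) ≤ 1 := (div_le_one hxy).2 hb
  rw [mul_pow, Real.sq_sqrt (by linarith)]
  field_simp

namespace RadialStep

variable {b f q q' p p' : ℝ}

lemma jPlus_eq (hq : q ≠ 0) (hq' : q' ≠ 0) (hb : b ≤ q ^ 2 * q' ^ 2)
    (hp' : p' = q * √(1 - b / (q ^ 2 * q' ^ 2))) :
    p' ^ 2 + b / q' ^ 2 = q ^ 2 := by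
  rw [hp', sq_mul_sqrt_one_sub_div hq hq' hb]
  ring

lemma jMinus_eq (hq : q ≠ 0) (hq' : q' ≠ 0) (hb : b ≤ q ^ 2 * q' ^ 2)
    (hp : q' * √(1 - b / (q ^ 2 * q' ^ 2)) + p = 2 * f * q) :
    q' ^ 2 = (p ^ 2 + b / q ^ 2) - 4 * (q * p) * f + 4 * q ^ 2 * f ^ 2 := by
  have hsq := sq_mul_sqrt_one_sub_div hq' hq (b := b) (by linarith)
  rw [mul_comm (q' ^ 2), eq_sub_of_add_eq hp] at hsq
  linear_combination -hsq

lemma jThree_eq (hp : q' * √(1 - b / (q ^ 2 * q' ^ 2)) + p = 2 * f * q)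
    (hp' : p' = q * √(1 - b / (q ^ 2 * q' ^ 2))) :
    q' * p' = -(q * p) + 2 * q ^ 2 * f := by
  rw [hp']
  linear_combination q * hp

end RadialStep

theorem sl2_closure_for_radial_potentials_general (N : ℕ) (b : Fin N → ℝ)
    (W : ℝ → ℝ)
    (q q' p p' : Fin N → ℝ)
    (hq : ∀ k, 0 < q k) (hq' : ∀ k, 0 < q' k)
    (hb : ∀ k, b k ≤ (q k) ^ 2 * (q' k) ^ 2)
    (hup1 : ∀ k, q' k * Real.sqrt (1 - b k / ((q k) ^ 2 * (q' k) ^ 2)) + p k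
        = 2 * deriv W (∑ l, (q l) ^ 2) * q k)
    (hup2 : ∀ k, p' k = q k * Real.sqrt (1 - b k / ((q k) ^ 2 * (q' k) ^ 2))) :
    (∑ k, ((p' k) ^ 2 + b k / (q' k) ^ 2) = ∑ k, (q k) ^ 2)
    ∧ (∑ k, (q' k) ^ 2
        = (∑ k, ((p k) ^ 2 + b k / (q k) ^ 2))
          - 4 * (∑ k, q k * p k) * deriv W (∑ k, (q k) ^ 2)
          + 4 * (∑ k, (q k) ^ 2) * (deriv W (∑ k, (q k) ^ 2)) ^ 2)
    ∧ (∑ k, q' k * p' k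
        = -(∑ k, q k * p k) + 2 * (∑ k, (q k) ^ 2) * deriv W (∑ k, (q k) ^ 2)) := by
  refine ⟨sum_congr rfl fun k _ ↦
      RadialStep.jPlus_eq (hq k).ne' (hq' k).ne' (hb k) (hup2 k), ?_, ?_⟩
  · rw [sum_congr rfl fun k _ ↦ RadialStep.jMinus_eq (hq k).ne' (hq' k).ne' (hb k) (hup1 k)]
    simp only [sum_add_distrib, sum_sub_distrib, ← sum_mul, ← mul_sum]
  · rw [sum_congr rfl fun k _ ↦ RadialStep.jThree_eq (hup1 k) (hup2 k)]
    simp only [sum_add_distrib, sum_neg_distrib, ← sum_mul, ← mul_sum]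

theorem sl2_closure_for_radial_potentials (N : ℕ) (hN : 1 ≤ N) (b : Fin N → ℝ)
    (W : ℝ → ℝ) (hW : ∀ x : ℝ, 0 < x → DifferentiableAt ℝ W x)
    (q q' p p' : Fin N → ℝ)
    (hq : ∀ k, 0 < q k) (hq' : ∀ k, 0 < q' k)
    (hb : ∀ k, b k ≤ (q k) ^ 2 * (q' k) ^ 2)
    (hup1 : ∀ k, q' k * Real.sqrt (1 - b k / ((q k) ^ 2 * (q' k) ^ 2)) + p k
        = 2 * deriv W (∑ l, (q l) ^ 2) * q k)
    (hup2 : ∀ k, p' k = q k * Real.sqrt (1 - b k / ((q k) ^ 2 * (q' k) ^ 2))) :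
    (∑ k, ((p' k) ^ 2 + b k / (q' k) ^ 2) = ∑ k, (q k) ^ 2)
    ∧ (∑ k, (q' k) ^ 2
        = (∑ k, ((p k) ^ 2 + b k / (q k) ^ 2))
          - 4 * (∑ k, q k * p k) * deriv W (∑ k, (q k) ^ 2)
          + 4 * (∑ k, (q k) ^ 2) * (deriv W (∑ k, (q k) ^ 2)) ^ 2)
    ∧ (∑ k, q' k * p' k
        = -(∑ k, q k * p k) + 2 * (∑ k, (q k) ^ 2) * deriv W (∑ k, (q k) ^ 2)) :=
  sl2_closure_for_radial_potentials_general N b W q q' p p' hq hq' hb hup1 hup2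
end

section
/- Let f : ℝ → ℝ be a function and let a₁, a₂, a₃ ∈ ℝ, not all zero, be such that the linear function I(J₊, J₋, J₃) = a₁·J₊ + a₂·J₋ + a₃·J₃ is invariant under the sl₂ evolution map Φ_f, i.e. I(Φ_f(J₊, J₋, J₃)) = I(J₊, J₋, J₃) for all (J₊, J₋, J₃) ∈ ℝ³. Then a₁ = a₂ ≠ 0, f is the constant function f(ξ) = κ/2 with κ = −a₃/a₁, and I = a₁·(J₊ + J₋ − κ·J₃). -/
/-- The sl₂ evolution map associated to a function `f : ℝ → ℝ`. -/
noncomputable def Phi (f : ℝ → ℝ) : ℝ × ℝ × ℝ → ℝ × ℝ × ℝ :=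
  fun J => (J.2.1,
            J.1 - 4 * J.2.2 * f J.2.1 + 4 * J.2.1 * (f J.2.1) ^ 2,
            -J.2.2 + 2 * J.2.1 * f J.2.1)

/-!
For fixed `J₋`, the defect `I ∘ Φ_f - I` of a linear form `I` is affine in `(J₊, J₃)`, with
`J₊`-coefficient `a₂ - a₁` and `J₃`-coefficient `-(4 a₂ f(J₋) + 2 a₃)`. Invariance kills both,
so `a₁ = a₂` and `2 a₂ f ≡ -a₃`; if `a₁ = 0` this forces `a₃ = 0` as well.
-/

def linearForm (a₁ a₂ a₃ : ℝ) (J : ℝ × ℝ × ℝ) : ℝ :=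
  a₁ * J.1 + a₂ * J.2.1 + a₃ * J.2.2

lemma linearForm_Phi_sub (f : ℝ → ℝ) (a₁ a₂ a₃ Jp Jm J3 : ℝ) :
    linearForm a₁ a₂ a₃ (Phi f (Jp, Jm, J3)) - linearForm a₁ a₂ a₃ (Jp, Jm, J3)
      = (a₂ - a₁) * Jp - (4 * a₂ * f Jm + 2 * a₃) * J3
        + (a₁ - a₂ + 4 * a₂ * f Jm ^ 2 + 2 * a₃ * f Jm) * Jm := by
  simp only [linearForm, Phi]
  ring

section Invariant

variable {f : ℝ → ℝ} {a₁ a₂ a₃ : ℝ}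
  (hinv : ∀ Jp Jm J3 : ℝ,
    linearForm a₁ a₂ a₃ (Phi f (Jp, Jm, J3)) = linearForm a₁ a₂ a₃ (Jp, Jm, J3))

include hinv

lemma eq_of_linearForm_Phi_invariant : a₁ = a₂ := by
  have h := linearForm_Phi_sub f a₁ a₂ a₃ 1 0 0
  rw [hinv, sub_self] at h
  linarith

lemma mul_apply_eq_of_linearForm_Phi_invariant (ξ : ℝ) : 2 * a₂ * f ξ = -a₃ := by
  have h₀ := linearForm_Phi_sub f a₁ a₂ a₃ 0 ξ 0
  have h₁ := linearForm_Phi_sub f a₁ a₂ a₃ 0 ξ 1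
  rw [hinv, sub_self] at h₀ h₁
  linarith

lemma ne_zero_of_linearForm_Phi_invariant (hne : ¬(a₁ = 0 ∧ a₂ = 0 ∧ a₃ = 0)) : a₁ ≠ 0 := by
  intro h₁
  have h₂ : a₂ = 0 := (eq_of_linearForm_Phi_invariant hinv).symm.trans h₁
  have h₃ := mul_apply_eq_of_linearForm_Phi_invariant hinv 0
  rw [h₂] at h₃
  exact hne ⟨h₁, h₂, by linarith⟩

end Invariant

theorem linear_invariant_classification (f : ℝ → ℝ) (a₁ a₂ a₃ : ℝ)
    (hne : ¬(a₁ = 0 ∧ a₂ = 0 ∧ a₃ = 0))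
    (hinv : ∀ Jp Jm J3 : ℝ,
      a₁ * (Phi f (Jp, Jm, J3)).1 + a₂ * (Phi f (Jp, Jm, J3)).2.1
        + a₃ * (Phi f (Jp, Jm, J3)).2.2
      = a₁ * Jp + a₂ * Jm + a₃ * J3) :
    a₁ = a₂ ∧ a₁ ≠ 0 ∧ (∀ ξ : ℝ, f ξ = (-a₃ / a₁) / 2) ∧
      (∀ Jp Jm J3 : ℝ, a₁ * Jp + a₂ * Jm + a₃ * J3
        = a₁ * (Jp + Jm - (-a₃ / a₁) * J3)) := by
  have ha : a₁ = a₂ := eq_of_linearForm_Phi_invariant hinv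
  have ha₁ : a₁ ≠ 0 := ne_zero_of_linearForm_Phi_invariant hinv hne
  refine ⟨ha, ha₁, fun ξ => ?_, fun Jp Jm J3 => ?_⟩
  · have h := mul_apply_eq_of_linearForm_Phi_invariant hinv ξ
    rw [← ha] at h
    field_simp
    linarith
  · rw [← ha]
    field_simp
    ring
end

section
/- Let λ₁, λ₂, λ₃ ∈ ℝ and let f(ξ) = λ₁/(2·(λ₃ − λ₂·ξ)). Then the quadratic function I₂(J₊, J₋, J₃) = λ₃·(J₊ + J₋) − λ₁·J₃ − λ₂·J₃² is invariant under the sl₂ evolution map Φ_f: for every (J₊, J₋, J₃) ∈ ℝ³ with λ₃ − λ₂·J₋ ≠ 0, one has I₂(Φ_f(J₊, J₋, J₃)) = I₂(J₊, J₋, J₃). -/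
/-!
Writing `ξ = J₋` and `d = λ₃ − λ₂ ξ`, the increment of `I₂` along one step of `Φ_f` factors as
`2 (λ₁ − 2 d f(ξ)) (J₃ − ξ f(ξ))`, for every `f`. The choice `f(ξ) = λ₁ / (2 d)` kills the
first factor wherever `d ≠ 0`.
-/

def I2 (lam₁ lam₂ lam₃ : ℝ) (J : ℝ × ℝ × ℝ) : ℝ :=
  lam₃ * (J.1 + J.2.1) - lam₁ * J.2.2 - lam₂ * J.2.2 ^ 2

section

variable (lam₁ lam₂ lam₃ : ℝ) (f : ℝ → ℝ) (J : ℝ × ℝ × ℝ)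

theorem I2_Phi_sub :
    I2 lam₁ lam₂ lam₃ (Phi f J) - I2 lam₁ lam₂ lam₃ J =
      2 * (lam₁ - 2 * (lam₃ - lam₂ * J.2.1) * f J.2.1) * (J.2.2 - J.2.1 * f J.2.1) := by
  simp only [I2, Phi]
  ring

theorem I2_Phi_of_two_mul_eq {lam₁ lam₂ lam₃ f J}
    (hf : 2 * (lam₃ - lam₂ * J.2.1) * f J.2.1 = lam₁) :
    I2 lam₁ lam₂ lam₃ (Phi f J) = I2 lam₁ lam₂ lam₃ J := by
  have h := I2_Phi_sub lam₁ lam₂ lam₃ f J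
  rwa [hf, sub_self, mul_zero, zero_mul, sub_eq_zero] at h

end

theorem I2_invariant (lam₁ lam₂ lam₃ : ℝ) (Jp Jm J3 : ℝ)
    (hden : lam₃ - lam₂ * Jm ≠ 0) :
    lam₃ * ((Phi (fun ξ => lam₁ / (2 * (lam₃ - lam₂ * ξ))) (Jp, Jm, J3)).1
        + (Phi (fun ξ => lam₁ / (2 * (lam₃ - lam₂ * ξ))) (Jp, Jm, J3)).2.1)
      - lam₁ * (Phi (fun ξ => lam₁ / (2 * (lam₃ - lam₂ * ξ))) (Jp, Jm, J3)).2.2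
      - lam₂ * ((Phi (fun ξ => lam₁ / (2 * (lam₃ - lam₂ * ξ))) (Jp, Jm, J3)).2.2) ^ 2
      = lam₃ * (Jp + Jm) - lam₁ * J3 - lam₂ * J3 ^ 2 :=
  I2_Phi_of_two_mul_eq (J := (Jp, Jm, J3)) (mul_div_cancel₀ lam₁ (mul_ne_zero two_ne_zero hden))
end

section
/- Let τ ∈ ℝ, let ε ∈ {1, −1}, and let f(ξ) = ε/2 + τ/(2·ξ). Then the cubic function I₃(J₊, J₋, J₃) = (J₊ + J₋ − 2·ε·J₃)·(τ² − 2·τ·J₃ + J₊·J₋) is invariant under the sl₂ evolution map Φ_f: for every (J₊, J₋, J₃) ∈ ℝ³ with J₋ ≠ 0, one has I₃(Φ_f(J₊, J₋, J₃)) = I₃(J₊, J₋, J₃). -/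
section FactorSwap

def linearFactor (ε : ℝ) (J : ℝ × ℝ × ℝ) : ℝ := J.1 + J.2.1 - 2 * ε * J.2.2

def quadraticFactor (τ : ℝ) (J : ℝ × ℝ × ℝ) : ℝ := τ ^ 2 - 2 * τ * J.2.2 + J.1 * J.2.1

variable {τ ε : ℝ}

theorem mul_linearFactor_Phi (hε : ε ^ 2 = 1) {Jp Jm J3 : ℝ} (hJm : Jm ≠ 0) :
    Jm * linearFactor ε (Phi (fun ξ => ε / 2 + τ / (2 * ξ)) (Jp, Jm, J3)) =
      quadraticFactor τ (Jp, Jm, J3) := by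
  simp only [linearFactor, quadraticFactor, Phi]
  field_simp
  linear_combination (-4 * Jm ^ 2) * hε

theorem quadraticFactor_Phi (hε : ε ^ 2 = 1) {Jp Jm J3 : ℝ} (hJm : Jm ≠ 0) :
    quadraticFactor τ (Phi (fun ξ => ε / 2 + τ / (2 * ξ)) (Jp, Jm, J3)) =
      Jm * linearFactor ε (Jp, Jm, J3) := by
  simp only [linearFactor, quadraticFactor, Phi]
  field_simp
  linear_combination (4 * Jm ^ 2) * hε

end FactorSwap

theorem I3_invariant (τ ε : ℝ) (hε : ε = 1 ∨ ε = -1) (Jp Jm J3 : ℝ)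
    (hJm : Jm ≠ 0) :
    ((Phi (fun ξ => ε / 2 + τ / (2 * ξ)) (Jp, Jm, J3)).1
        + (Phi (fun ξ => ε / 2 + τ / (2 * ξ)) (Jp, Jm, J3)).2.1
        - 2 * ε * (Phi (fun ξ => ε / 2 + τ / (2 * ξ)) (Jp, Jm, J3)).2.2)
      * (τ ^ 2 - 2 * τ * (Phi (fun ξ => ε / 2 + τ / (2 * ξ)) (Jp, Jm, J3)).2.2
          + (Phi (fun ξ => ε / 2 + τ / (2 * ξ)) (Jp, Jm, J3)).1
            * (Phi (fun ξ => ε / 2 + τ / (2 * ξ)) (Jp, Jm, J3)).2.1)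
      = (Jp + Jm - 2 * ε * J3) * (τ ^ 2 - 2 * τ * J3 + Jp * Jm) := by
  have hε2 : ε ^ 2 = 1 := by rcases hε with rfl | rfl <;> norm_num
  change linearFactor ε _ * quadraticFactor τ _ =
    linearFactor ε (Jp, Jm, J3) * quadraticFactor τ (Jp, Jm, J3)
  rw [quadraticFactor_Phi hε2 hJm, ← mul_linearFactor_Phi hε2 hJm]
  ring
end

section
/- Let N ≥ 2, b₁, …, b_N ∈ ℝ, and for 2 ≤ m ≤ N define on (0,∞)^N × ℝ^N the left coalgebraic invariant C^[m](q,p) = Σ_{1 ≤ i < j ≤ m} [(qᵢ·pⱼ − qⱼ·pᵢ)² + bᵢ·qⱼ²/qᵢ² + bⱼ·qᵢ²/qⱼ²] + Σ_{j=1}^{m} bⱼ. Then C^[m] Poisson commutes with each of the three generators of the N degrees of freedom realisation of sl₂(ℝ): {C^[m], J₊} = {C^[m], J₋} = {C^[m], J₃} = 0, where J₊(q,p) = Σₖ (pₖ² + bₖ/qₖ²), J₋(q,p) = Σₖ qₖ², J₃(q,p) = Σₖ qₖ·pₖ, and the canonical Poisson bracket of two smooth functions F, G on (0,∞)^N ×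 ℝ^N is {F,G} = Σₖ (∂F/∂qₖ·∂G/∂pₖ − ∂F/∂pₖ·∂G/∂qₖ). -/
/-!
Each summand of `C^[m]` is, up to the constant `bᵢ + bⱼ`, the Casimir `J₊J₋ - J₃²` of the
two-particle realisation in the coordinates `i, j`, so it commutes with the generators restricted
to those two particles. Since the generators are sums of one-particle functions, the other
particles do not enter the bracket of a summand with them: `{C^[m], J}` is a sum over pairs of
two-particle brackets, each of which vanishes by a direct computation.
-/

open Finset

/-- Partial derivative of `F(q,p)` with respect to `qₖ`. -/
noncomputable def pderivQ {N : ℕ} (F : (Fin N → ℝ) → (Fin N → ℝ) → ℝ) (k : Fin N)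
    (q p : Fin N → ℝ) : ℝ :=
  deriv (fun x => F (Function.update q k x) p) (q k)

/-- Partial derivative of `F(q,p)` with respect to `pₖ`. -/
noncomputable def pderivP {N : ℕ} (F : (Fin N → ℝ) → (Fin N → ℝ) → ℝ) (k : Fin N)
    (q p : Fin N → ℝ) : ℝ :=
  deriv (fun x => F q (Function.update p k x)) (p k)

/-- The canonical Poisson bracket `{F,G} = Σₖ (∂F/∂qₖ ∂G/∂pₖ − ∂F/∂pₖ ∂G/∂qₖ)`. -/
noncomputable def poisson {N : ℕ} (F G : (Fin N → ℝ) → (Fin N → ℝ) → ℝ)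
    (q p : Fin N → ℝ) : ℝ :=
  ∑ k, (pderivQ F k q p * pderivP G k q p - pderivP F k q p * pderivQ G k q p)

/-- The left coalgebraic invariant `C^[m]`. -/
noncomputable def Cleft {N : ℕ} (b : Fin N → ℝ) (m : ℕ)
    (q p : Fin N → ℝ) : ℝ :=
  (∑ t ∈ (Finset.univ : Finset (Fin N × Fin N)).filter
      (fun t => t.1 < t.2 ∧ t.2.val < m),
    ((q t.1 * p t.2 - q t.2 * p t.1) ^ 2
      + b t.1 * (q t.2) ^ 2 / (q t.1) ^ 2 + b t.2 * (q t.1) ^ 2 / (q t.2) ^ 2))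
  + ∑ j ∈ Finset.univ.filter (fun j : Fin N => j.val < m), b j

open Function

section UpdateSums

variable {ι : Type*} [DecidableEq ι]

theorem hasDerivAt_sum_apply_update [Fintype ι] (f : ι → ℝ → ℝ) (u : ι → ℝ) (k : ι) {d : ℝ}
    (hf : HasDerivAt (f k) d (u k)) :
    HasDerivAt (fun x => ∑ l, f l (update u k x l)) d (u k) := by
  simp only [apply_update f, Finset.sum_update_of_mem (Finset.mem_univ k)]
  exact hf.add_const _

theorem hasDerivAt_update_pair {v : ι → ℝ} {i j : ι} (hij : i ≠ j) {ψ : ℝ → ℝ → ℝ}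
    {a c : ℝ} (hi : HasDerivAt (ψ · (v j)) a (v i)) (hj : HasDerivAt (ψ (v i) ·) c (v j))
    (k : ι) :
    HasDerivAt (fun x => ψ (update v k x i) (update v k x j))
      ((Pi.single i a + Pi.single j c : ι → ℝ) k) (v k) := by
  by_cases hki : k = i
  · subst hki
    simpa [update_of_ne hij.symm, Pi.single_apply, hij] using hi
  by_cases hkj : k = j
  · subst hkj
    simpa [update_of_ne hij, Pi.single_apply, hki] using hj
  simpa [update_of_ne (Ne.symm hki), update_of_ne (Ne.symm hkj), Pi.single_apply, hki, hkj]
    using hasDerivAt_const (v k) (ψ (v i) (v j))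

theorem sum_single_add_single_mul [Fintype ι] (i j : ι) (a c : ℝ) (v : ι → ℝ) :
    ∑ k, (Pi.single i a + Pi.single j c : ι → ℝ) k * v k = a * v i + c * v j := by
  simp [add_mul, Finset.sum_add_distrib, Pi.single_apply]

end UpdateSums

section PartialDerivs

variable {N : ℕ}

def HasPartialDerivsAt (F : (Fin N → ℝ) → (Fin N → ℝ) → ℝ) (dq dp q p : Fin N → ℝ) : Prop :=
  ∀ k, HasDerivAt (fun x => F (update q k x) p) (dq k) (q k) ∧
    HasDerivAt (fun y => F q (update p k y)) (dp k) (p k)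

variable {F G : (Fin N → ℝ) → (Fin N → ℝ) → ℝ} {fq fp gq gp q p : Fin N → ℝ}

theorem HasPartialDerivsAt.poisson_eq (hF : HasPartialDerivsAt F fq fp q p)
    (hG : HasPartialDerivsAt G gq gp q p) :
    poisson F G q p = ∑ k, (fq k * gp k - fp k * gq k) :=
  Finset.sum_congr rfl fun k _ => by
    rw [pderivQ, pderivP, pderivQ, pderivP, (hF k).1.deriv, (hF k).2.deriv, (hG k).1.deriv,
      (hG k).2.deriv]

theorem HasPartialDerivsAt.add_const (hF : HasPartialDerivsAt F fq fp q p) (c : ℝ) :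
    HasPartialDerivsAt (fun q p => F q p + c) fq fp q p :=
  fun k => ⟨(hF k).1.add_const c, (hF k).2.add_const c⟩

theorem HasPartialDerivsAt.sum {ι : Type*} (s : Finset ι)
    {F : ι → (Fin N → ℝ) → (Fin N → ℝ) → ℝ} {fq fp : ι → Fin N → ℝ}
    (hF : ∀ t ∈ s, HasPartialDerivsAt (F t) (fq t) (fp t) q p) :
    HasPartialDerivsAt (fun q p => ∑ t ∈ s, F t q p) (∑ t ∈ s, fq t) (∑ t ∈ s, fp t) q p :=
  fun k => by
    simp only [Finset.sum_apply]
    exact ⟨HasDerivAt.fun_sum fun t ht => (hF t ht k).1,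
      HasDerivAt.fun_sum fun t ht => (hF t ht k).2⟩

theorem hasPartialDerivsAt_sum_coord (g : Fin N → ℝ → ℝ → ℝ)
    (hq : ∀ k, HasDerivAt (fun x => g k x (p k)) (gq k) (q k))
    (hp : ∀ k, HasDerivAt (g k (q k)) (gp k) (p k)) :
    HasPartialDerivsAt (fun q p => ∑ k, g k (q k) (p k)) gq gp q p := fun k =>
  ⟨hasDerivAt_sum_apply_update (fun l x => g l x (p l)) q k (hq k),
    hasDerivAt_sum_apply_update (fun l y => g l (q l) y) p k (hp k)⟩

end PartialDerivs

section PairTerm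

noncomputable def pairTerm (β₁ β₂ x₁ x₂ y₁ y₂ : ℝ) : ℝ :=
  (x₁ * y₂ - x₂ * y₁) ^ 2 + β₁ * x₂ ^ 2 / x₁ ^ 2 + β₂ * x₁ ^ 2 / x₂ ^ 2

noncomputable def pairTermDerivX (β₁ β₂ x₁ x₂ y₁ y₂ : ℝ) : ℝ :=
  2 * (x₁ * y₂ - x₂ * y₁) * y₂ - 2 * β₁ * x₂ ^ 2 / x₁ ^ 3 + 2 * β₂ * x₁ / x₂ ^ 2

def pairTermDerivY (x₁ x₂ y₁ y₂ : ℝ) : ℝ :=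
  -2 * (x₁ * y₂ - x₂ * y₁) * x₂

variable {β₁ β₂ x₁ x₂ y₁ y₂ : ℝ}

theorem pairTerm_comm (β₁ β₂ x₁ x₂ y₁ y₂ : ℝ) :
    pairTerm β₁ β₂ x₁ x₂ y₁ y₂ = pairTerm β₂ β₁ x₂ x₁ y₂ y₁ := by
  unfold pairTerm
  ring

theorem hasDerivAt_pairTerm_x (hx : x₁ ≠ 0) :
    HasDerivAt (pairTerm β₁ β₂ · x₂ y₁ y₂) (pairTermDerivX β₁ β₂ x₁ x₂ y₁ y₂) x₁ := by
  have h : HasDerivAt (fun x => (x * y₂ - x₂ * y₁) ^ 2 + β₁ * x₂ ^ 2 * (x ^ 2)⁻¹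
      + x ^ 2 * (β₂ / x₂ ^ 2)) _ x₁ :=
    ((((hasDerivAt_id x₁).mul_const y₂).sub_const (x₂ * y₁)).pow 2).add
      (((hasDerivAt_pow 2 x₁).inv (pow_ne_zero 2 hx)).const_mul (β₁ * x₂ ^ 2)) |>.add
      ((hasDerivAt_pow 2 x₁).mul_const (β₂ / x₂ ^ 2))
  convert h using 1
  · funext x
    simp only [pairTerm]
    ring
  · simp only [pairTermDerivX, id]
    field_simp
    ring

theorem hasDerivAt_pairTerm_y :
    HasDerivAt (pairTerm β₁ β₂ x₁ x₂ · y₂) (pairTermDerivY x₁ x₂ y₁ y₂) y₁ := by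
  have h : HasDerivAt (fun y => (x₁ * y₂ - x₂ * y) ^ 2
      + (β₁ * x₂ ^ 2 / x₁ ^ 2 + β₂ * x₁ ^ 2 / x₂ ^ 2)) _ y₁ :=
    ((((hasDerivAt_id y₁).const_mul x₂).const_sub (x₁ * y₂)).pow 2).add_const _
  convert h using 1
  · funext y
    simp only [pairTerm]
    ring
  · simp only [pairTermDerivY, id]
    ring

end PairTerm

section Cleft

variable {N : ℕ} {q p : Fin N → ℝ}

theorem hasPartialDerivsAt_pairTerm (b : Fin N → ℝ) {i j : Fin N} (hij : i ≠ j)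
    (hi : q i ≠ 0) (hj : q j ≠ 0) :
    HasPartialDerivsAt (fun q p => pairTerm (b i) (b j) (q i) (q j) (p i) (p j))
      (Pi.single i (pairTermDerivX (b i) (b j) (q i) (q j) (p i) (p j))
        + Pi.single j (pairTermDerivX (b j) (b i) (q j) (q i) (p j) (p i)))
      (Pi.single i (pairTermDerivY (q i) (q j) (p i) (p j))
        + Pi.single j (pairTermDerivY (q j) (q i) (p j) (p i))) q p := fun k =>
  ⟨hasDerivAt_update_pair hij (ψ := fun x₁ x₂ => pairTerm (b i) (b j) x₁ x₂ (p i) (p j))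
      (hasDerivAt_pairTerm_x hi)
      (by simpa only [pairTerm_comm (b i)] using hasDerivAt_pairTerm_x hj) k,
    hasDerivAt_update_pair hij (ψ := pairTerm (b i) (b j) (q i) (q j))
      hasDerivAt_pairTerm_y
      (by simpa only [pairTerm_comm (b i)] using hasDerivAt_pairTerm_y) k⟩

theorem poisson_Cleft_eq_zero {G : (Fin N → ℝ) → (Fin N → ℝ) → ℝ} {gq gp : Fin N → ℝ}
    (b : Fin N → ℝ) (m : ℕ) (hq : ∀ k, q k ≠ 0) (hG : HasPartialDerivsAt G gq gp q p)
    (hpair : ∀ i j, i ≠ j →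
      pairTermDerivX (b i) (b j) (q i) (q j) (p i) (p j) * gp i
        - pairTermDerivY (q i) (q j) (p i) (p j) * gq i
      + (pairTermDerivX (b j) (b i) (q j) (q i) (p j) (p i) * gp j
        - pairTermDerivY (q j) (q i) (p j) (p i) * gq j) = 0) :
    poisson (Cleft b m) G q p = 0 := by
  set S := (Finset.univ : Finset (Fin N × Fin N)).filter (fun t => t.1 < t.2 ∧ t.2.val < m)
  have hne : ∀ t ∈ S, t.1 ≠ t.2 := fun t ht => (Finset.mem_filter.1 ht).2.1.ne
  have hC : HasPartialDerivsAt (Cleft b m) _ _ q p :=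
    (HasPartialDerivsAt.sum S fun t ht =>
      hasPartialDerivsAt_pairTerm b (hne t ht) (hq t.1) (hq t.2)).add_const _
  rw [hC.poisson_eq hG]
  simp only [Finset.sum_apply, Finset.sum_mul, ← Finset.sum_sub_distrib]
  rw [Finset.sum_comm]
  refine Finset.sum_eq_zero fun t ht => ?_
  rw [Finset.sum_sub_distrib, sum_single_add_single_mul, sum_single_add_single_mul,
    ← hpair t.1 t.2 (hne t ht)]
  ring

theorem hasPartialDerivsAt_Jplus (b : Fin N → ℝ) (hq : ∀ k, q k ≠ 0) :
    HasPartialDerivsAt (fun x y => ∑ k, ((y k) ^ 2 + b k / (x k) ^ 2))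
      (fun k => -2 * b k / q k ^ 3) (fun k => 2 * p k) q p :=
  hasPartialDerivsAt_sum_coord (fun k x y => y ^ 2 + b k / x ^ 2)
    (fun k => (((hasDerivAt_const (q k) (b k)).div (hasDerivAt_pow 2 (q k))
      (pow_ne_zero 2 (hq k))).const_add (p k ^ 2)).congr_deriv (by field_simp [hq k]; ring))
    (fun k => by simpa using ((hasDerivAt_pow 2 (p k)).add_const (b k / q k ^ 2)))

theorem hasPartialDerivsAt_Jminus :
    HasPartialDerivsAt (fun x (_ : Fin N → ℝ) => ∑ k, (x k) ^ 2) (fun k => 2 * q k) 0 q p :=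
  hasPartialDerivsAt_sum_coord (fun _ x _ => x ^ 2)
    (fun k => by simpa using hasDerivAt_pow 2 (q k)) (fun k => hasDerivAt_const (p k) _)

theorem hasPartialDerivsAt_J3 :
    HasPartialDerivsAt (fun x y => ∑ k, x k * y k) p q q p :=
  hasPartialDerivsAt_sum_coord (fun _ x y => x * y)
    (fun k => by simpa using (hasDerivAt_id (q k)).mul_const (p k))
    (fun k => by simpa using (hasDerivAt_id (p k)).const_mul (q k))

end Cleft

theorem Cleft_poisson_commutes_with_generators_general (N : ℕ)
    (b : Fin N → ℝ) (m : ℕ)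
    (q p : Fin N → ℝ) (hq : ∀ k, 0 < q k) :
    poisson (Cleft b m) (fun x y => ∑ k, ((y k) ^ 2 + b k / (x k) ^ 2)) q p = 0
    ∧ poisson (Cleft b m) (fun x _ => ∑ k, (x k) ^ 2) q p = 0
    ∧ poisson (Cleft b m) (fun x y => ∑ k, x k * y k) q p = 0 := by
  have hq₀ : ∀ k, q k ≠ 0 := fun k => (hq k).ne'
  refine ⟨poisson_Cleft_eq_zero b m hq₀ (hasPartialDerivsAt_Jplus b hq₀) ?_,
    poisson_Cleft_eq_zero b m hq₀ hasPartialDerivsAt_Jminus ?_,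
    poisson_Cleft_eq_zero b m hq₀ hasPartialDerivsAt_J3 ?_⟩ <;>
  · intro i j _
    have := hq₀ i
    have := hq₀ j
    simp only [pairTermDerivX, pairTermDerivY, Pi.zero_apply]
    field_simp
    ring

theorem Cleft_poisson_commutes_with_generators (N : ℕ) (hN : 2 ≤ N)
    (b : Fin N → ℝ) (m : ℕ) (hm : 2 ≤ m) (hmN : m ≤ N)
    (q p : Fin N → ℝ) (hq : ∀ k, 0 < q k) :
    poisson (Cleft b m) (fun x y => ∑ k, ((y k) ^ 2 + b k / (x k) ^ 2)) q p = 0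
    ∧ poisson (Cleft b m) (fun x _ => ∑ k, (x k) ^ 2) q p = 0
    ∧ poisson (Cleft b m) (fun x y => ∑ k, x k * y k) q p = 0 :=
  Cleft_poisson_commutes_with_generators_general N b m q p hq
end

section
/- Let N ≥ 1, κ ∈ ℝ, b₁, …, b_N ∈ ℝ, and let q, q' ∈ (0,∞)^N, p, p' ∈ ℝ^N satisfy bₖ ≤ qₖ²·q'ₖ² and the discrete Smorodinsky–Winternitz update equations q'ₖ·√(1 − bₖ/(qₖ²·q'ₖ²)) + pₖ = κ·qₖ and p'ₖ = qₖ·√(1 − bₖ/(qₖ²·q'ₖ²)) for each k = 1, …, N. Then the function H₁(q,p) = (1/2)·Σₖ [pₖ² + bₖ/qₖ² + qₖ² − κ·qₖ·pₖ] is invariant: H₁(q', p') = H₁(q, p). -/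
/-!
Fix a coordinate and put `s = √(1 - b / (q² q'²))`, so that `b = (1 - s²) q² q'²`,
`p = κ q - q' s` and `p' = q s`. Substituting, both the old and the new one-dimensional
energy `p² + b / q² + q² - κ q p` reduce to the expression `q² + q'² - κ q q' s`, which is
symmetric in `q` and `q'`; summing over the coordinates gives the invariance of `H₁`.
-/

open Finset

noncomputable def swEnergy (κ b q p : ℝ) : ℝ := p ^ 2 + b / q ^ 2 + q ^ 2 - κ * q * p

section SymmetricForm

variable {κ b q q' p p' s : ℝ}

theorem swEnergy_eq_of_momentum_eq_mul (hq' : q' ≠ 0) (hb : b = (1 - s ^ 2) * (q ^ 2 * q' ^ 2))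
    (hp' : p' = q * s) : swEnergy κ b q' p' = q ^ 2 + q' ^ 2 - κ * q * q' * s := by
  rw [swEnergy, hb, hp']
  field_simp
  ring

theorem swEnergy_eq_of_momentum_eq_sub (hq : q ≠ 0) (hb : b = (1 - s ^ 2) * (q ^ 2 * q' ^ 2))
    (hp : p = κ * q - q' * s) : swEnergy κ b q p = q ^ 2 + q' ^ 2 - κ * q * q' * s := by
  rw [swEnergy, hb, hp]
  field_simp
  ring

end SymmetricForm

theorem one_sub_sq_sqrt_one_sub_div_mul {b c : ℝ} (hc : 0 < c) (hb : b ≤ c) :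
    (1 - Real.sqrt (1 - b / c) ^ 2) * c = b := by
  rw [Real.sq_sqrt (sub_nonneg.mpr ((div_le_one hc).mpr hb))]
  field_simp
  ring

theorem swEnergy_update_eq {κ b q q' p p' : ℝ} (hq : q ≠ 0) (hq' : q' ≠ 0)
    (hb : b ≤ q ^ 2 * q' ^ 2)
    (hup1 : q' * Real.sqrt (1 - b / (q ^ 2 * q' ^ 2)) + p = κ * q)
    (hup2 : p' = q * Real.sqrt (1 - b / (q ^ 2 * q' ^ 2))) :
    swEnergy κ b q' p' = swEnergy κ b q p := by
  have hb' := (one_sub_sq_sqrt_one_sub_div_mul (by positivity) hb).symm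
  rw [swEnergy_eq_of_momentum_eq_mul hq' hb' hup2,
    swEnergy_eq_of_momentum_eq_sub hq hb' (eq_sub_of_add_eq' hup1)]

theorem dSW_energy_invariant_general (N : ℕ) (κ : ℝ) (b : Fin N → ℝ)
    (q q' p p' : Fin N → ℝ)
    (hq : ∀ k, 0 < q k) (hq' : ∀ k, 0 < q' k)
    (hb : ∀ k, b k ≤ (q k) ^ 2 * (q' k) ^ 2)
    (hup1 : ∀ k, q' k * Real.sqrt (1 - b k / ((q k) ^ 2 * (q' k) ^ 2)) + p k = κ * q k)
    (hup2 : ∀ k, p' k = q k * Real.sqrt (1 - b k / ((q k) ^ 2 * (q' k) ^ 2))) :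
    (1 / 2) * ∑ k, ((p' k) ^ 2 + b k / (q' k) ^ 2 + (q' k) ^ 2 - κ * q' k * p' k)
      = (1 / 2) * ∑ k, ((p k) ^ 2 + b k / (q k) ^ 2 + (q k) ^ 2 - κ * q k * p k) := by
  congr 1
  refine sum_congr rfl fun k _ => ?_
  exact swEnergy_update_eq (hq k).ne' (hq' k).ne' (hb k) (hup1 k) (hup2 k)

theorem dSW_energy_invariant (N : ℕ) (hN : 1 ≤ N) (κ : ℝ) (b : Fin N → ℝ)
    (q q' p p' : Fin N → ℝ)
    (hq : ∀ k, 0 < q k) (hq' : ∀ k, 0 < q' k)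
    (hb : ∀ k, b k ≤ (q k) ^ 2 * (q' k) ^ 2)
    (hup1 : ∀ k, q' k * Real.sqrt (1 - b k / ((q k) ^ 2 * (q' k) ^ 2)) + p k = κ * q k)
    (hup2 : ∀ k, p' k = q k * Real.sqrt (1 - b k / ((q k) ^ 2 * (q' k) ^ 2))) :
    (1 / 2) * ∑ k, ((p' k) ^ 2 + b k / (q' k) ^ 2 + (q' k) ^ 2 - κ * q' k * p' k)
      = (1 / 2) * ∑ k, ((p k) ^ 2 + b k / (q k) ^ 2 + (q k) ^ 2 - κ * q k * p k) :=
  dSW_energy_invariant_general N κ b q q' p p' hq hq' hb hup1 hup2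
end

section
/- Let b ∈ ℝ, c ∈ ℝ, and let q, q' > 0 and p, p' ∈ ℝ satisfy b ≤ q²·q'², q'·√(1 − b/(q²·q'²)) + p = c·q, and p' = q·√(1 − b/(q²·q'²)). Then the one degree of freedom energy is preserved: p'² + q'² + b/q'² − c·q'·p' = p² + q² + b/q² − c·q·p. Consequently, for the N degrees of freedom anisotropic discrete Smorodinsky–Winternitz map, in which the k-th component is updated with constant cₖ, each of the N functions 𝖧ₖ(q,p) = (1/2)·(pₖ² + qₖ² + bₖ/qₖ² − cₖ·qₖ·pₖ) is separately invariant. -/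
/-!
Write `s = √(1 - b/(q²q'²))`, so that `b = q²q'²(1 - s²)`, `p' = q s` and `p = c q - q' s`.
Substituting, both the old and the new energy reduce to the same expression `q² + q'² - c q q' s`.
-/

/-- Twice the one-degree-of-freedom energy `𝖧`. -/
def dSWEnergy {K : Type*} [Field K] (b c q p : K) : K :=
  p ^ 2 + q ^ 2 + b / q ^ 2 - c * q * p

theorem dSWEnergy_eq_of_sq_eq {K : Type*} [Field K] {b c q q' s : K} (hq : q ≠ 0) (hq' : q' ≠ 0)
    (hs : s ^ 2 = 1 - b / (q ^ 2 * q' ^ 2)) :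
    dSWEnergy b c q' (q * s) = dSWEnergy b c q (c * q - q' * s) := by
  have hb : b = q ^ 2 * q' ^ 2 * (1 - s ^ 2) := by
    rw [hs]
    field_simp
    ring
  subst hb
  unfold dSWEnergy
  field_simp
  ring

theorem dSWEnergy_map_eq {b c q q' p p' : ℝ} (hq : 0 < q) (hq' : 0 < q')
    (hb : b ≤ q ^ 2 * q' ^ 2)
    (h1 : q' * Real.sqrt (1 - b / (q ^ 2 * q' ^ 2)) + p = c * q)
    (h2 : p' = q * Real.sqrt (1 - b / (q ^ 2 * q' ^ 2))) :
    dSWEnergy b c q' p' = dSWEnergy b c q p := by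
  have hsq : Real.sqrt (1 - b / (q ^ 2 * q' ^ 2)) ^ 2 = 1 - b / (q ^ 2 * q' ^ 2) :=
    Real.sq_sqrt (sub_nonneg.2 ((div_le_one (by positivity)).2 hb))
  rw [h2, eq_sub_of_add_eq' h1]
  exact dSWEnergy_eq_of_sq_eq hq.ne' hq'.ne' hsq

theorem anisotropic_dSW_energy (b c : ℝ) (q q' p p' : ℝ)
    (hq : 0 < q) (hq' : 0 < q') (hb : b ≤ q ^ 2 * q' ^ 2)
    (h1 : q' * Real.sqrt (1 - b / (q ^ 2 * q' ^ 2)) + p = c * q)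
    (h2 : p' = q * Real.sqrt (1 - b / (q ^ 2 * q' ^ 2))) :
    (p' ^ 2 + q' ^ 2 + b / q' ^ 2 - c * q' * p'
      = p ^ 2 + q ^ 2 + b / q ^ 2 - c * q * p)
    ∧ ∀ (N : ℕ), 1 ≤ N → ∀ (B cc P P' : Fin N → ℝ) (Q Q' : Fin N → ℝ),
        (∀ k, 0 < Q k) → (∀ k, 0 < Q' k) →
        (∀ k, B k ≤ (Q k) ^ 2 * (Q' k) ^ 2) →
        (∀ k, Q' k * Real.sqrt (1 - B k / ((Q k) ^ 2 * (Q' k) ^ 2)) + P k = cc k * Q k) →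
        (∀ k, P' k = Q k * Real.sqrt (1 - B k / ((Q k) ^ 2 * (Q' k) ^ 2))) →
        ∀ k, (1 / 2) * ((P' k) ^ 2 + (Q' k) ^ 2 + B k / (Q' k) ^ 2 - cc k * Q' k * P' k)
          = (1 / 2) * ((P k) ^ 2 + (Q k) ^ 2 + B k / (Q k) ^ 2 - cc k * Q k * P k) := by
  refine ⟨dSWEnergy_map_eq hq hq' hb h1 h2, ?_⟩
  intro N _ B cc P P' Q Q' hQ hQ' hB hB1 hB2 k
  exact congrArg (1 / 2 * ·) (dSWEnergy_map_eq (hQ k) (hQ' k) (hB k) (hB1 k) (hB2 k))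
end

section
/- Let κ ∈ ℝ, let M be the 3×3 real matrix with rows (0, 1, 0), (1, κ², −2κ), (0, κ, −1), and let L ≥ 1 be a natural number. Then M^L equals the 3×3 identity matrix if and only if there exists a natural number k with 1 ≤ k ≤ L−1 such that κ = 2·cos(k·π/L). -/
/-!
In the basis `(E, -F, H/2)` of `sl₂`, the matrix `M` is (the transpose of) the adjoint action of
`g = [[0, 1], [-1, κ]] ∈ SL₂`. By Cayley–Hamilton, `gⁿ = [[-sₙ₋₂, sₙ₋₁], [-sₙ₋₁, sₙ]]` with
`sₖ = Sₖ(κ)` the rescaled Chebyshev polynomials of the second kind, so the entries of `Mⁿ` are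
quadratic in `sₙ₋₂, sₙ₋₁, sₙ`. Hence `M^L = 1` forces `s_{L-1}² = 0`, and conversely
`s_{L-1} = 0` together with `det gᴸ = 1` gives `s_{L-2}² = 1` and `M^L = 1`. Finally
`S_{L-1}(2x) = U_{L-1}(x)`, whose roots are `cos (kπ/L)`, `1 ≤ k ≤ L - 1`.
-/

open Polynomial Polynomial.Chebyshev Real

section Evolution

variable {R : Type*} [CommRing R]

def slTwoEvolution (κ : R) : Matrix (Fin 3) (Fin 3) R :=
  !![0, 1, 0; 1, κ ^ 2, -2 * κ; 0, κ, -1]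

theorem slTwoEvolution_pow (κ : R) (n : ℕ) :
    slTwoEvolution κ ^ n =
      !![(S R (n - 2)).eval κ ^ 2, (S R (n - 1)).eval κ ^ 2,
          -2 * (S R (n - 1)).eval κ * (S R (n - 2)).eval κ;
        (S R (n - 1)).eval κ ^ 2, (S R n).eval κ ^ 2,
          -2 * (S R (n - 1)).eval κ * (S R n).eval κ;
        (S R (n - 1)).eval κ * (S R (n - 2)).eval κ, (S R (n - 1)).eval κ * (S R n).eval κ,
          -((S R (n - 2)).eval κ * (S R n).eval κ + (S R (n - 1)).eval κ ^ 2)] := by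
  induction n with
  | zero =>
    ext i j
    fin_cases i <;> fin_cases j <;> simp [S_neg_two]
  | succ n ih =>
    have hsucc : (S R (n + 1 : ℕ)).eval κ = κ * (S R n).eval κ - (S R (n - 1)).eval κ := by
      simpa using congrArg (eval κ) (S_add_one R n)
    have hpred : (S R (n - 2)).eval κ = κ * (S R (n - 1)).eval κ - (S R n).eval κ := by
      simpa using congrArg (eval κ) (S_sub_two R n)
    rw [pow_succ, ih, hpred, hsucc, show ((n + 1 : ℕ) : ℤ) - 1 = n by push_cast; ring,
      show ((n + 1 : ℕ) : ℤ) - 2 = n - 1 by push_cast; ring, slTwoEvolution, Matrix.mul_fin_three]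
    simp only [EmbeddingLike.apply_eq_iff_eq, Matrix.vecCons_inj, and_true]
    refine ⟨⟨?_, ?_, ?_⟩, ⟨?_, ?_, ?_⟩, ?_, ?_, ?_⟩ <;> ring

theorem slTwoEvolution_pow_eq_one_iff [IsReduced R] (κ : R) (n : ℕ) :
    slTwoEvolution κ ^ n = 1 ↔ (S R (n - 1)).eval κ = 0 := by
  rw [slTwoEvolution_pow]
  constructor
  · intro h
    simpa using congrFun (congrFun h 0) 1
  · intro h
    have hcassini : (S R (n - 2)).eval κ ^ 2 = 1 := by
      have := congrArg (eval κ) (S_sq_add_S_sq R (n - 2))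
      simpa [show (n : ℤ) - 2 + 1 = n - 1 by ring, h] using this
    have hS : (S R n).eval κ = -(S R (n - 2)).eval κ := by
      simpa [h] using congrArg (eval κ) (S_eq R n)
    simp [Matrix.one_fin_three, h, hS, ← sq, hcassini]

end Evolution

theorem eval_S_real_eq_zero_iff (n : ℕ) (x : ℝ) :
    (S ℝ n).eval x = 0 ↔ ∃ k : ℕ, 1 ≤ k ∧ k ≤ n ∧ x = 2 * cos (k * π / (n + 1)) := by
  have hU : (S ℝ n).eval x = (U ℝ n).eval (x / 2) := by
    rw [← S_comp_two_mul_X, eval_comp]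
    simp [mul_div_cancel₀]
  rw [hU, ← IsRoot.def, ← mem_roots (U_ne_zero ℝ n (by omega)), roots_U_real,
    Finset.mem_val, Finset.mem_image]
  constructor
  · rintro ⟨k, hk, hcos⟩
    refine ⟨k + 1, by omega, Finset.mem_range.mp hk, ?_⟩
    push_cast
    linarith
  · rintro ⟨k, hk1, hkn, rfl⟩
    obtain ⟨j, rfl⟩ := Nat.exists_eq_add_of_le' hk1
    refine ⟨j, Finset.mem_range.mpr (by omega), ?_⟩
    push_cast
    ring

theorem periodicity_classification (κ : ℝ) (L : ℕ) (hL : 1 ≤ L) :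
    (!![(0 : ℝ), 1, 0; 1, κ ^ 2, -2 * κ; 0, κ, -1]) ^ L = 1 ↔
      ∃ k : ℕ, 1 ≤ k ∧ k ≤ L - 1 ∧ κ = 2 * Real.cos (k * Real.pi / L) := by
  obtain ⟨n, rfl⟩ := Nat.exists_eq_add_of_le' hL
  rw [Nat.add_sub_cancel, Nat.cast_add_one, ← eval_S_real_eq_zero_iff]
  have h := slTwoEvolution_pow_eq_one_iff κ (n + 1)
  rwa [Nat.cast_add_one, add_sub_cancel_right] at h
end

section
/- Let β, ω ∈ ℝ, let Q : ℝ → ℝ be twice continuously differentiable with Q(s) > 0 for all s, and fix t ∈ ℝ. Then the scaled discrete Smorodinsky–Winternitz equation converges to the continuous Smorodinsky–Winternitz equation: the limit as h → 0⁺ of (1/h³)·[ h·Q(t+h)·√(1 − h⁶β/(h⁴·Q(t)²·Q(t+h)²)) + h·Q(t−h)·√(1 − h⁶β/(h⁴·Q(t)²·Q(t−h)²)) − (2 − h²·ω²)·h·Q(t) ] equals Q''(t) + ω²·Q(t) − β/Q(t)³. -/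
/-!
Dividing by `h`, the expression splits into the symmetric second difference quotient
`(Q(t+h) + Q(t-h) - 2Q(t))/h²`, which tends to `Q''(t)` by Taylor's theorem, the constant
`ω²Q(t)`, and for each neighbour `q = Q(t ± h)` the defect `q(√(1 - h²β/(Q(t)²q²)) - 1)/h²`.
Rationalizing `√(1 - x) - 1 = -x/(√(1 - x) + 1)` turns each defect into a function continuous
at `h = 0` with value `-β/(2Q(t)³)`.
-/

open Filter Topology

theorem taylorWithinEval_two_univ (f : ℝ → ℝ) (x₀ x : ℝ) :
    taylorWithinEval f 2 Set.univ x₀ x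
      = f x₀ + deriv f x₀ * (x - x₀) + deriv (deriv f) x₀ / 2 * (x - x₀) ^ 2 := by
  simp only [taylorWithinEval_succ, taylor_within_zero_eval, iteratedDerivWithin_univ,
    iteratedDeriv_succ, iteratedDeriv_zero, smul_eq_mul, Nat.factorial]
  push_cast
  ring

theorem ContDiff.tendsto_symm_second_difference_quotient {f : ℝ → ℝ} (hf : ContDiff ℝ 2 f)
    (t : ℝ) :
    Tendsto (fun h => (f (t + h) + f (t - h) - 2 * f t) / h ^ 2) (𝓝[≠] 0)
      (𝓝 (deriv (deriv f) t)) := by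
  have hr := taylor_isLittleO_univ hf (x₀ := t)
  have hp : (fun h => f (t + h) - taylorWithinEval f 2 Set.univ t (t + h)) =o[𝓝 0]
      fun h => h ^ 2 := by
    simpa [Function.comp_def] using
      hr.comp_tendsto ((continuous_const_add t).tendsto' 0 t (add_zero t))
  have hm : (fun h => f (t - h) - taylorWithinEval f 2 Set.univ t (t - h)) =o[𝓝 0]
      fun h => h ^ 2 := by
    simpa [Function.comp_def] using
      hr.comp_tendsto ((continuous_sub_left t).tendsto' 0 t (sub_zero t))
  have hremainder : (fun h => f (t + h) + f (t - h) - 2 * f t - deriv (deriv f) t * h ^ 2)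
      =o[𝓝 0] fun h => h ^ 2 := by
    refine (hp.add hm).congr_left fun h => ?_
    rw [taylorWithinEval_two_univ, taylorWithinEval_two_univ]
    ring
  have hquot := (hremainder.mono (nhdsWithin_le_nhds (s := {0}ᶜ))).tendsto_div_nhds_zero.add_const
    (deriv (deriv f) t)
  rw [zero_add] at hquot
  refine hquot.congr' (eventually_nhdsWithin_of_forall fun h (hh : h ≠ 0) => ?_)
  field_simp
  ring

theorem Real.sqrt_one_sub_sub_one {x : ℝ} (hx : x ≤ 1) :
    √(1 - x) - 1 = -x / (√(1 - x) + 1) := by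
  have hs : √(1 - x) ^ 2 = 1 - x := Real.sq_sqrt (by linarith)
  field_simp
  linear_combination hs

theorem tendsto_sqrt_defect_div_cube {q : ℝ → ℝ} {a : ℝ} (hq : ContinuousAt q 0) (hq0 : q 0 = a)
    (ha : a ≠ 0) (β : ℝ) :
    Tendsto (fun h => (h * q h * √(1 - h ^ 6 * β / (h ^ 4 * a ^ 2 * q h ^ 2)) - h * q h) / h ^ 3)
      (𝓝[≠] 0) (𝓝 (-(β / (2 * a ^ 3)))) := by
  set x : ℝ → ℝ := fun h => h ^ 2 * β / (a ^ 2 * q h ^ 2) with hx_def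
  have hx0 : x 0 = 0 := by simp [x]
  have hx : ContinuousAt x 0 :=
    ((continuous_pow 2).continuousAt.mul continuousAt_const).div
      (continuousAt_const.mul (hq.pow 2)) (by simp [hq0, ha])
  have hcorr : ContinuousAt (fun h => -(β / (a ^ 2 * q h * (√(1 - x h) + 1)))) 0 :=
    (continuousAt_const.div (continuousAt_const.mul hq |>.mul
      ((continuousAt_const.sub hx).sqrt.add continuousAt_const))
      (by norm_num [hx0, hq0, ha])).neg
  have hsmall : ∀ᶠ h in 𝓝[≠] 0, x h ≤ 1 ∧ q h ≠ 0 ∧ h ≠ 0 := by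
    filter_upwards [nhdsWithin_le_nhds (hx.eventually (eventually_le_nhds (hx0 ▸ one_pos))),
      nhdsWithin_le_nhds (hq.eventually_ne (hq0 ▸ ha)), self_mem_nhdsWithin] with h h1 h2 h3
    exact ⟨h1, h2, h3⟩
  have hval : -(β / (a ^ 2 * q 0 * (√(1 - x 0) + 1))) = -(β / (2 * a ^ 3)) := by
    norm_num [hx0, hq0]
    ring
  refine (hval ▸ hcorr.tendsto.mono_left nhdsWithin_le_nhds).congr' (hsmall.mono ?_)
  rintro h ⟨hx1, hqh, hh⟩
  have hxh : h ^ 6 * β / (h ^ 4 * a ^ 2 * q h ^ 2) = x h := by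
    rw [hx_def]
    field_simp
  dsimp only
  rw [hxh, ← mul_sub_one, Real.sqrt_one_sub_sub_one hx1, hx_def]
  field_simp

theorem dSW_continuum_limit (β ω : ℝ) (Q : ℝ → ℝ) (hQ : ContDiff ℝ 2 Q)
    (hQpos : ∀ s, 0 < Q s) (t : ℝ) :
    Filter.Tendsto (fun h : ℝ =>
      (1 / h ^ 3) *
        (h * Q (t + h) * Real.sqrt (1 - h ^ 6 * β / (h ^ 4 * (Q t) ^ 2 * (Q (t + h)) ^ 2))
          + h * Q (t - h) * Real.sqrt (1 - h ^ 6 * β / (h ^ 4 * (Q t) ^ 2 * (Q (t - h)) ^ 2))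
          - (2 - h ^ 2 * ω ^ 2) * (h * Q t)))
      (nhdsWithin 0 (Set.Ioi 0))
      (nhds (deriv (deriv Q) t + ω ^ 2 * Q t - β / (Q t) ^ 3)) := by
  have hQt : Q t ≠ 0 := (hQpos t).ne'
  have hplus := tendsto_sqrt_defect_div_cube (q := fun h => Q (t + h))
    (hQ.continuous.comp (continuous_const_add t)).continuousAt (by simp) hQt β
  have hminus := tendsto_sqrt_defect_div_cube (q := fun h => Q (t - h))
    (hQ.continuous.comp (continuous_sub_left t)).continuousAt (by simp) hQt β
  have hsum := ((hQ.tendsto_symm_second_difference_quotient t).add_const (ω ^ 2 * Q t)).add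
    (hplus.add hminus)
  have hlim : deriv (deriv Q) t + ω ^ 2 * Q t - β / Q t ^ 3
      = deriv (deriv Q) t + ω ^ 2 * Q t + (-(β / (2 * Q t ^ 3)) + -(β / (2 * Q t ^ 3))) := by
    field_simp
    ring
  rw [hlim]
  refine (hsum.mono_left (nhdsGT_le_nhdsNE 0)).congr' ?_
  filter_upwards [self_mem_nhdsWithin] with h (hh : 0 < h)
  field_simp
  ring
end
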